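/- For α ∈ ℝ, β ∈ ℂ, and natural number n, define Z_n(β, α) = (1/√(2π)) · ∫_ℝ x^n · exp(−x²/2 + i·α·x³ + β·x) dx. Then for every n ≥ 1: Z_n(β, α) = (n−1)·Z_{n−2}(β, α) + 3·i·α·Z_{n+1}(β, α) + β·Z_{n−1}(β, α), where Z_{−1} is interpreted as 0. -/

import Mathlib

open MeasureTheory Real

/-- The auxiliary integrals `Z_n(β, α) = (1/√(2π)) ∫ xⁿ exp(-x²/2 + iαx³ + βx) dx`. -/
noncomputable def cubicZn (n : ℕ) (β : ℂ) (α : ℝ) : ℂ :=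
  (1 / Real.sqrt (2 * π) : ℝ) *
    ∫ x : ℝ, (x : ℂ) ^ n *
      Complex.exp (-(x : ℂ) ^ 2 / 2 + Complex.I * α * (x : ℂ) ^ 3 + β * x)

/-!
Differentiating `xᵐ w(x)`, where `w(x) = exp(-x²/2 + iαx³ + βx)` and
`w' = (-x + 3iαx² + β) w`, gives `m xᵐ⁻¹ w - xᵐ⁺¹ w + 3iα xᵐ⁺² w + β xᵐ w`. Since
`|w(x)| = exp(-x²/2 + Re β · x)` is dominated by a Gaussian, both `xᵐ w` and this derivative are
integrable over `ℝ`, so the integral of the derivative vanishes; this is the recursion for the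
moments `∫ xᵏ w`, and `Z_k` is such a moment up to the factor `1/√(2π)`.
-/

lemma integrable_pow_abs_mul_exp_neg_mul_sq_add_mul {a : ℝ} (ha : 0 < a) (k : ℕ) (b : ℝ) :
    Integrable fun x : ℝ => |x| ^ k * rexp (-a * x ^ 2 + b * x) := by
  have hmajorant :
      Integrable fun x : ℝ => rexp (b ^ 2 / (2 * a)) * (|x| ^ k * rexp (-(a / 2) * x ^ 2)) := by
    refine Integrable.const_mul ?_ _
    simpa [Real.rpow_natCast, abs_mul, abs_pow, abs_of_pos (Real.exp_pos _)] using
      (integrable_rpow_mul_exp_neg_mul_sq (half_pos ha) (s := k)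
        (by linarith [(Nat.cast_nonneg k : (0 : ℝ) ≤ k)])).abs
  refine hmajorant.mono' (by fun_prop) (Filter.Eventually.of_forall fun x => ?_)
  have hexp : rexp (-a * x ^ 2 + b * x) ≤ rexp (b ^ 2 / (2 * a)) * rexp (-(a / 2) * x ^ 2) := by
    rw [← Real.exp_add, Real.exp_le_exp, ← sub_nonneg]
    have hgap : b ^ 2 / (2 * a) + -(a / 2) * x ^ 2 - (-a * x ^ 2 + b * x) =
        (a * x - b) ^ 2 / (2 * a) := by
      field_simp
      ring
    rw [hgap]
    positivity
  rw [Real.norm_of_nonneg (by positivity), mul_left_comm]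
  exact mul_le_mul_of_nonneg_left hexp (by positivity)

section CubicMoments

variable (β : ℂ) (α : ℝ)

noncomputable def cubicWeight (x : ℝ) : ℂ :=
  Complex.exp (-(x : ℂ) ^ 2 / 2 + Complex.I * α * (x : ℂ) ^ 3 + β * x)

noncomputable def cubicMoment (k : ℕ) : ℂ :=
  ∫ x : ℝ, (x : ℂ) ^ k * cubicWeight β α x

lemma cubicZn_eq_mul_cubicMoment (k : ℕ) :
    cubicZn k β α = (1 / Real.sqrt (2 * π) : ℝ) * cubicMoment β α k :=
  rfl

lemma norm_cubicWeight (x : ℝ) : ‖cubicWeight β α x‖ = rexp (-(1 / 2) * x ^ 2 + β.re * x) := by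
  rw [cubicWeight, Complex.norm_exp]
  congr 1
  simp [← Complex.ofReal_pow, Complex.add_re, Complex.mul_re, Complex.mul_im, div_eq_inv_mul]

lemma continuous_cubicWeight : Continuous (cubicWeight β α) := by
  unfold cubicWeight
  fun_prop

lemma integrable_pow_mul_cubicWeight (k : ℕ) :
    Integrable fun x : ℝ => (x : ℂ) ^ k * cubicWeight β α x := by
  have hmeas : AEStronglyMeasurable (fun x : ℝ => (x : ℂ) ^ k * cubicWeight β α x) :=
    ((Complex.continuous_ofReal.pow k).mul (continuous_cubicWeight β α)).aestronglyMeasurable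
  refine (integrable_norm_iff hmeas).mp ?_
  simpa only [norm_mul, norm_pow, Complex.norm_real, Real.norm_eq_abs, norm_cubicWeight] using
    integrable_pow_abs_mul_exp_neg_mul_sq_add_mul one_half_pos k β.re

lemma hasDerivAt_cubicWeight (x : ℝ) :
    HasDerivAt (cubicWeight β α)
      ((-(x : ℂ) + 3 * Complex.I * α * (x : ℂ) ^ 2 + β) * cubicWeight β α x) x := by
  have hexponent : HasDerivAt (fun z : ℂ => -z ^ 2 / 2 + Complex.I * α * z ^ 3 + β * z)
      (-(x : ℂ) + 3 * Complex.I * α * (x : ℂ) ^ 2 + β) x := by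
    refine ((((hasDerivAt_pow 2 (x : ℂ)).neg.div_const 2).add
      ((hasDerivAt_pow 3 (x : ℂ)).const_mul (Complex.I * α))).add
      ((hasDerivAt_id (x : ℂ)).const_mul β)).congr_deriv (by ring)
  exact hexponent.cexp.comp_ofReal.congr_deriv (mul_comm _ _)

-- At `m = 0` the truncated index `m - 1 = 0` is harmless, its coefficient being `m = 0`.
lemma cubicMoment_succ (m : ℕ) :
    cubicMoment β α (m + 1) =
      m * cubicMoment β α (m - 1) + 3 * Complex.I * α * cubicMoment β α (m + 2) +
        β * cubicMoment β α m := by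
  set g : ℕ → ℝ → ℂ := fun k x => (x : ℂ) ^ k * cubicWeight β α x
  have hg : ∀ k, Integrable (g k) := integrable_pow_mul_cubicWeight β α
  have hderiv : ∀ x : ℝ, HasDerivAt (g m)
      (m * g (m - 1) x - g (m + 1) x + 3 * Complex.I * α * g (m + 2) x + β * g m x) x := by
    intro x
    refine (((hasDerivAt_pow m (x : ℂ)).comp_ofReal).mul
      (hasDerivAt_cubicWeight β α x)).congr_deriv ?_
    simp only [g]
    ring
  have hboundary := integral_eq_zero_of_hasDerivAt_of_integrable hderiv (by fun_prop) (hg m)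
  rw [integral_add (by fun_prop) (by fun_prop), integral_add (by fun_prop) (by fun_prop),
    integral_sub (by fun_prop) (by fun_prop), integral_const_mul, integral_const_mul,
    integral_const_mul] at hboundary
  unfold cubicMoment
  linear_combination -hboundary

end CubicMoments

/-- The integration-by-parts recursion
`Z_n = (n-1) Z_{n-2} + 3iα Z_{n+1} + β Z_{n-1}` for `n ≥ 1`
(for `n = 1` the first term has vanishing coefficient, encoding `Z_{-1} = 0`). -/
theorem cubicZn_recursion (n : ℕ) (hn : 1 ≤ n) (β : ℂ) (α : ℝ) :
    cubicZn n β α =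
      ((n : ℂ) - 1) * cubicZn (n - 2) β α + 3 * Complex.I * α * cubicZn (n + 1) β α +
        β * cubicZn (n - 1) β α := by
  obtain ⟨m, rfl⟩ := Nat.exists_eq_add_of_le' hn
  rw [show m + 1 - 2 = m - 1 by omega, Nat.add_sub_cancel]
  simp only [cubicZn_eq_mul_cubicMoment]
  rw [cubicMoment_succ]
  push_cast
  ring
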